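/- There exists a constant C > 0 such that for every linear map A : ℝ² → ℝ² with det(A) > 0 satisfying ||A vᵢ| − 1| ≤ 1 for all i ∈ {1,2,3}, where v₁ = (1,0), v₂ = (1/2, √3/2), v₃ = v₁ − v₂, one has inf_{R ∈ SO(2)} |A − R|² ≤ C · max_{i ∈ {1,2,3}} ||A vᵢ| − 1|², where |M| = √(tr(MᵀM)) is the Frobenius norm on 2×2 matrices and |v| is the Euclidean norm on ℝ². -/

import Mathlib

open Matrix

/-- Frobenius norm of a 2×2 real matrix: `|M| = √(tr(MᵀM))`. -/
noncomputable def frobNorm (M : Matrix (Fin 2) (Fin 2) ℝ) : ℝ :=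
  Real.sqrt (Matrix.trace (Mᵀ * M))

/-- The group SO(2) of 2×2 rotation matrices. -/
def SO2 : Set (Matrix (Fin 2) (Fin 2) ℝ) := {R | Rᵀ * R = 1 ∧ R.det = 1}

/-- Euclidean norm of a vector in ℝ². -/
noncomputable def euclNorm (v : Fin 2 → ℝ) : ℝ := Real.sqrt (v 0 ^ 2 + v 1 ^ 2)

/-!
If `σ₁, σ₂ ≥ 0` are the singular values of `A` (`det A > 0`), the nearest rotation is the
normalisation of `A + cof A`, and `dist(A, SO(2))² = Σ (σᵢ - 1)² ≤ Σ (σᵢ² - 1)² = |AᵀA - 1|²`.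
The Gram matrix `AᵀA` is determined by the three quadratic-form values `|A vᵢ|²`, so
`|AᵀA - 1|²` is bounded by a multiple of `max (|A vᵢ|² - 1)²`; finally `||A vᵢ|² - 1| ≤ 3 ||A vᵢ| - 1|`
as long as `||A vᵢ| - 1| ≤ 1`.
-/

lemma frobNorm_sq (M : Matrix (Fin 2) (Fin 2) ℝ) :
    frobNorm M ^ 2 = M 0 0 ^ 2 + M 0 1 ^ 2 + M 1 0 ^ 2 + M 1 1 ^ 2 := by
  have htrace : trace (Mᵀ * M) = M 0 0 ^ 2 + M 0 1 ^ 2 + M 1 0 ^ 2 + M 1 1 ^ 2 := by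
    simp only [trace, diag, mul_apply, transpose_apply, Fin.sum_univ_two]
    ring
  rw [frobNorm, htrace, Real.sq_sqrt (by positivity)]

lemma euclNorm_mulVec_sq (A : Matrix (Fin 2) (Fin 2) ℝ) (v : Fin 2 → ℝ) :
    euclNorm (A *ᵥ v) ^ 2 = (A 0 0 * v 0 + A 0 1 * v 1) ^ 2 + (A 1 0 * v 0 + A 1 1 * v 1) ^ 2 := by
  rw [euclNorm, Real.sq_sqrt (by positivity)]
  simp [mulVec, dotProduct, Fin.sum_univ_two]

lemma rotation_mem_SO2 {c s : ℝ} (h : c ^ 2 + s ^ 2 = 1) : !![c, -s; s, c] ∈ SO2 := by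
  refine ⟨?_, ?_⟩
  · ext i j
    fin_cases i <;> fin_cases j <;>
      simp only [Fin.zero_eta, Fin.mk_one, mul_apply, transpose_apply, of_apply, cons_val',
        cons_val_zero, cons_val_one, cons_val_fin_one, Fin.sum_univ_two, one_apply_eq,
        one_apply_ne, ne_eq, zero_ne_one, one_ne_zero, not_false_eq_true] <;>
      linarith
  · rw [det_fin_two_of]
    linear_combination h

lemma sInf_frobNorm_sub_sq_le (A : Matrix (Fin 2) (Fin 2) ℝ) {R : Matrix (Fin 2) (Fin 2) ℝ}
    (hR : R ∈ SO2) : sInf ((fun R => frobNorm (A - R) ^ 2) '' SO2) ≤ frobNorm (A - R) ^ 2 :=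
  csInf_le ⟨0, by rintro _ ⟨R', -, rfl⟩; positivity⟩ ⟨R, hR, rfl⟩

/-- `σ₁, σ₂` are the singular values of `!![p, q; r, s]`, obtained as `(N ± m) / 2` from its
splitting into a conformal part `(p + s, r - q)` and an anticonformal part `(p - s, q + r)`. -/
lemma exists_singularValues (p q r s : ℝ) (hdet : 0 ≤ p * s - q * r) :
    ∃ σ₁ σ₂ : ℝ, 0 ≤ σ₁ ∧ 0 ≤ σ₂ ∧ σ₁ + σ₂ = √((p + s) ^ 2 + (r - q) ^ 2) ∧
      σ₁ ^ 2 + σ₂ ^ 2 = p ^ 2 + q ^ 2 + r ^ 2 + s ^ 2 ∧ σ₁ * σ₂ = p * s - q * r := by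
  set N := √((p + s) ^ 2 + (r - q) ^ 2)
  set m := √((p - s) ^ 2 + (q + r) ^ 2)
  have hN2 : N ^ 2 = (p + s) ^ 2 + (r - q) ^ 2 := Real.sq_sqrt (by positivity)
  have hm2 : m ^ 2 = (p - s) ^ 2 + (q + r) ^ 2 := Real.sq_sqrt (by positivity)
  have hmN : m ≤ N := Real.sqrt_le_sqrt (by nlinarith)
  refine ⟨(N + m) / 2, (N - m) / 2, by positivity, by linarith, by ring, ?_, ?_⟩
  · linear_combination (hN2 + hm2) / 2
  · linear_combination (hN2 - hm2) / 4

lemma sq_sub_one_le_sq_sq_sub_one {σ : ℝ} (hσ : 0 ≤ σ) : (σ - 1) ^ 2 ≤ (σ ^ 2 - 1) ^ 2 := by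
  nlinarith [mul_nonneg (mul_nonneg (sq_nonneg (σ - 1)) hσ) (by linarith : (0 : ℝ) ≤ σ + 2)]

theorem sInf_frobNorm_sub_sq_le_frobNorm_gram_sub_one_sq (A : Matrix (Fin 2) (Fin 2) ℝ)
    (hA : 0 < A.det) :
    sInf ((fun R => frobNorm (A - R) ^ 2) '' SO2) ≤ frobNorm (Aᵀ * A - 1) ^ 2 := by
  obtain ⟨p, q, r, s, rfl⟩ : ∃ p q r s, A = !![p, q; r, s] := ⟨_, _, _, _, eta_fin_two A⟩
  rw [det_fin_two_of] at hA
  obtain ⟨σ₁, σ₂, hσ₁, hσ₂, hN, hsum, hprod⟩ := exists_singularValues p q r s hA.le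
  set N := √((p + s) ^ 2 + (r - q) ^ 2)
  have hN2 : N ^ 2 = (p + s) ^ 2 + (r - q) ^ 2 := Real.sq_sqrt (by positivity)
  have hNpos : 0 < N := by nlinarith
  set c := (p + s) / N
  set t := (r - q) / N
  have hc : c * N = p + s := div_mul_cancel₀ _ hNpos.ne'
  have ht : t * N = r - q := div_mul_cancel₀ _ hNpos.ne'
  have hct : c ^ 2 + t ^ 2 = 1 := by
    rw [div_pow, div_pow, ← add_div, ← hN2, div_self (by positivity)]
  have hdist : frobNorm (!![p, q; r, s] - !![c, -t; t, c]) ^ 2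
      = (σ₁ - 1) ^ 2 + (σ₂ - 1) ^ 2 := by
    rw [frobNorm_sq]
    simp only [Matrix.sub_apply, of_apply, cons_val', cons_val_zero, cons_val_one, cons_val_fin_one]
    linear_combination -hsum + (2 - 2 * N) * hct + 2 * c * hc + 2 * t * ht + 2 * hN
  have hgram : frobNorm (!![p, q; r, s]ᵀ * !![p, q; r, s] - 1) ^ 2
      = (σ₁ ^ 2 - 1) ^ 2 + (σ₂ ^ 2 - 1) ^ 2 := by
    rw [frobNorm_sq]
    simp only [Matrix.sub_apply, mul_apply, transpose_apply, of_apply, cons_val', cons_val_zero,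
      cons_val_one, cons_val_fin_one, Fin.sum_univ_two, one_apply_eq, one_apply_ne, ne_eq,
      zero_ne_one, one_ne_zero, not_false_eq_true]
    linear_combination -(σ₁ ^ 2 + σ₂ ^ 2 + p ^ 2 + q ^ 2 + r ^ 2 + s ^ 2 - 2) * hsum
      + 2 * (σ₁ * σ₂ + p * s - q * r) * hprod
  calc _ ≤ _ := sInf_frobNorm_sub_sq_le _ (rotation_mem_SO2 hct)
    _ = _ := hdist
    _ ≤ _ := add_le_add (sq_sub_one_le_sq_sq_sub_one hσ₁) (sq_sub_one_le_sq_sq_sub_one hσ₂)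
    _ = _ := hgram.symm

lemma frobNorm_gram_sub_one_sq_le_of_edges (A : Matrix (Fin 2) (Fin 2) ℝ) {K : ℝ}
    (h₁ : (euclNorm (A.mulVec ![1, 0]) ^ 2 - 1) ^ 2 ≤ K)
    (h₂ : (euclNorm (A.mulVec ![1 / 2, √3 / 2]) ^ 2 - 1) ^ 2 ≤ K)
    (h₃ : (euclNorm (A.mulVec (![1, 0] - ![1 / 2, √3 / 2])) ^ 2 - 1) ^ 2 ≤ K) :
    frobNorm (Aᵀ * A - 1) ^ 2 ≤ 20 / 3 * K := by
  set x := euclNorm (A.mulVec ![1, 0]) ^ 2 - 1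
  set y := euclNorm (A.mulVec ![1 / 2, √3 / 2]) ^ 2 - 1
  set z := euclNorm (A.mulVec (![1, 0] - ![1 / 2, √3 / 2])) ^ 2 - 1
  set W := A 0 1 ^ 2 + A 1 1 ^ 2
  set g := A 0 0 * A 0 1 + A 1 0 * A 1 1
  have h3 : √3 ^ 2 = 3 := Real.sq_sqrt (by norm_num)
  have hx : x = A 0 0 ^ 2 + A 1 0 ^ 2 - 1 := by
    simp only [x, euclNorm_mulVec_sq, cons_val_zero, cons_val_one, cons_val_fin_one]
    ring
  have hy : y = (A 0 0 ^ 2 + A 1 0 ^ 2) / 4 + √3 / 2 * g + 3 / 4 * W - 1 := by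
    simp only [y, euclNorm_mulVec_sq, cons_val_zero, cons_val_one, cons_val_fin_one]
    linear_combination W / 4 * h3
  have hz : z = (A 0 0 ^ 2 + A 1 0 ^ 2) / 4 - √3 / 2 * g + 3 / 4 * W - 1 := by
    simp only [z, euclNorm_mulVec_sq, Pi.sub_apply, cons_val_zero, cons_val_one, cons_val_fin_one]
    linear_combination W / 4 * h3
  have hgram : frobNorm (Aᵀ * A - 1) ^ 2
      = x ^ 2 + 2 / 3 * (y - z) ^ 2 + (2 * y + 2 * z - x) ^ 2 / 9 := by
    rw [frobNorm_sq, hx, hy, hz]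
    simp only [Matrix.sub_apply, mul_apply, transpose_apply, Fin.sum_univ_two, one_apply_eq,
      one_apply_ne, ne_eq, zero_ne_one, one_ne_zero, not_false_eq_true]
    linear_combination -2 / 3 * g ^ 2 * h3
  rw [hgram]
  -- `(y - z)² ≤ 2 (y² + z²)`, and Cauchy–Schwarz gives `(2y + 2z - x)² ≤ 9 (x² + y² + z²)`.
  nlinarith [sq_nonneg (y + z), sq_nonneg (y + 2 * x), sq_nonneg (z + 2 * x), sq_nonneg (y - z)]

lemma sq_sq_sub_one_le {a : ℝ} (h : |a - 1| ≤ 1) : (a ^ 2 - 1) ^ 2 ≤ 9 * |a - 1| ^ 2 := by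
  obtain ⟨hlo, hhi⟩ := abs_le.1 h
  rw [sq_abs]
  calc (a ^ 2 - 1) ^ 2 = (a - 1) ^ 2 * (a + 1) ^ 2 := by ring
    _ ≤ (a - 1) ^ 2 * 3 ^ 2 := by gcongr <;> linarith
    _ = 9 * (a - 1) ^ 2 := by ring

/-- There exists a constant `C > 0` such that every linear map `A : ℝ² → ℝ²` with
`det A > 0` and `||A vᵢ| - 1| ≤ 1` for the three unit vectors `v₁ = (1,0)`,
`v₂ = (1/2, √3/2)`, `v₃ = v₁ - v₂` satisfies
`inf_{R ∈ SO(2)} |A - R|² ≤ C · max_i ||A vᵢ| - 1|²`. -/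
theorem statement0 :
    ∃ C : ℝ, 0 < C ∧
      ∀ A : Matrix (Fin 2) (Fin 2) ℝ, 0 < A.det →
        |euclNorm (A.mulVec ![1, 0]) - 1| ≤ 1 →
        |euclNorm (A.mulVec ![1 / 2, Real.sqrt 3 / 2]) - 1| ≤ 1 →
        |euclNorm (A.mulVec (![1, 0] - ![1 / 2, Real.sqrt 3 / 2])) - 1| ≤ 1 →
        sInf ((fun R => frobNorm (A - R) ^ 2) '' SO2) ≤
          C * max (|euclNorm (A.mulVec ![1, 0]) - 1| ^ 2)
              (max (|euclNorm (A.mulVec ![1 / 2, Real.sqrt 3 / 2]) - 1| ^ 2)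
                (|euclNorm (A.mulVec (![1, 0] - ![1 / 2, Real.sqrt 3 / 2])) - 1| ^ 2)) := by
  refine ⟨60, by norm_num, fun A hA h₁ h₂ h₃ => ?_⟩
  set M := max (|euclNorm (A.mulVec ![1, 0]) - 1| ^ 2)
    (max (|euclNorm (A.mulVec ![1 / 2, √3 / 2]) - 1| ^ 2)
      (|euclNorm (A.mulVec (![1, 0] - ![1 / 2, √3 / 2])) - 1| ^ 2))
  have hgram : frobNorm (Aᵀ * A - 1) ^ 2 ≤ 20 / 3 * (9 * M) := by
    apply frobNorm_gram_sub_one_sq_le_of_edges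
    · exact (sq_sq_sub_one_le h₁).trans (by gcongr; exact le_max_left _ _)
    · exact (sq_sq_sub_one_le h₂).trans (by gcongr; exact le_max_of_le_right (le_max_left _ _))
    · exact (sq_sq_sub_one_le h₃).trans (by gcongr; exact le_max_of_le_right (le_max_right _ _))
  calc _ ≤ frobNorm (Aᵀ * A - 1) ^ 2 := sInf_frobNorm_sub_sq_le_frobNorm_gram_sub_one_sq A hA
    _ ≤ 60 * M := by linarith
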